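/- Let s(j) = cos(2πf₁j/n) + a·cos(2πf₂j/n + φ) with integer frequencies f₂ < f₁ ≤ n/2 − 1, and let w be a double convolution filter (DFT values in [0,1]) with ŵ(f₁) = 0 and ŵ(f₂) ∈ (0,1]. Then V_w^p s → cos(2πf₁j/n) (in Euclidean norm) as p → ∞; i.e., in the limit of iterations the first extracted IMF is exactly the higher-frequency component. -/

import Mathlib

open Finset Filter

/-- Discrete Fourier transform of `w : ZMod n → ℂ` at frequency `ξ`. -/
noncomputable def dft (n : ℕ) [NeZero n] (w : ZMod n → ℂ) (ξ : ZMod n) : ℂ :=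
  ∑ j : ZMod n, w j *
    Complex.exp (-2 * Real.pi * Complex.I * ((ξ.val : ℂ) * (j.val : ℂ)) / n)

/-- One step of the (circular) variation operator `V_w s = s − w * s`. -/
noncomputable def circVar (n : ℕ) [NeZero n] (w : ZMod n → ℂ) (s : ZMod n → ℂ) :
    ZMod n → ℂ :=
  fun j => s j - ∑ k : ZMod n, w k * s (j - k)

/-!
Each tone `cos(2πcj/n + ψ)` is a combination of the characters `k ↦ exp(±2πick/n)` of `ZMod n`.
These are eigenvectors of the convolution operator `V_w` with eigenvalues `1 - ŵ(±c)`, so for an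
even `ŵ` the tone itself is an eigenvector with eigenvalue `1 - ŵ(c)`. Hence `V_w` fixes the
`f₁`-tone and multiplies the `f₂`-tone by `1 - ŵ(f₂) ∈ [0, 1)`: the difference
`V_w^p s - cos(2πf₁j/n)` is the `f₂`-tone scaled by `(1 - ŵ(f₂))^p`, which tends to zero.
-/

open Complex

lemma LinearMap.iterate_apply_add_of_eq_smul {R M : Type*} [CommSemiring R] [AddCommMonoid M]
    [Module R M] {f : Module.End R M} {u v : M} {μ : R} (hu : f u = u) (hv : f v = μ • v)
    (p : ℕ) : f^[p] (u + v) = u + μ ^ p • v := by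
  induction p with
  | zero => simp
  | succ p ih => rw [Function.iterate_succ_apply', ih, map_add, map_smul, hu, hv, smul_smul,
      pow_succ]

lemma tendsto_sqrt_sum_norm_sq_pow_smul {𝕜 ι : Type*} [RCLike 𝕜] [Fintype ι] {μ : 𝕜}
    (hμ : ‖μ‖ < 1) (v : ι → 𝕜) :
    Tendsto (fun p : ℕ => Real.sqrt (∑ i, ‖(μ ^ p • v) i‖ ^ 2)) atTop (nhds 0) := by
  have h : Tendsto (fun p : ℕ => μ ^ p • WithLp.toLp 2 v) atTop (nhds 0) := by
    simpa using (tendsto_pow_atTop_nhds_zero_of_norm_lt_one hμ).smul_const (WithLp.toLp 2 v)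
  simpa [EuclideanSpace.norm_eq] using tendsto_zero_iff_norm_tendsto_zero.mp h

noncomputable def tone (n c : ℕ) (ψ : ℝ) : ZMod n → ℂ :=
  fun j => (Real.cos (2 * Real.pi * c * (j.val : ℝ) / n + ψ) : ℂ)

section Fourier

variable {n : ℕ} [NeZero n]

lemma dft_eq_zmod_dft (w : ZMod n → ℂ) : dft n w = ZMod.dft w := by
  ext ξ
  rw [dft, ZMod.dft_apply]
  refine sum_congr rfl fun j _ => ?_
  have hcast : -(j * ξ) = ((-((j.val : ℤ) * ξ.val) : ℤ) : ZMod n) := by simp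
  rw [hcast, ZMod.stdAddChar_coe, smul_eq_mul, mul_comm]
  congr 2
  push_cast
  ring

lemma stdAddChar_intCast_mul (c : ℤ) (j : ZMod n) :
    ZMod.stdAddChar ((c : ZMod n) * j) = exp (2 * Real.pi * I * c * j.val / n) := by
  have hcast : (c : ZMod n) * j = ((c * j.val : ℤ) : ZMod n) := by simp
  rw [hcast, ZMod.stdAddChar_coe]
  push_cast
  ring_nf

lemma tone_eq_stdAddChar (c : ℕ) (ψ : ℝ) :
    tone n c ψ = (exp (ψ * I) / 2) • (fun k => ZMod.stdAddChar (((c : ℤ) : ZMod n) * k)) +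
      (exp (-(ψ * I)) / 2) • fun k => ZMod.stdAddChar (((-c : ℤ) : ZMod n) * k) := by
  ext j
  simp only [tone, Pi.add_apply, Pi.smul_apply, smul_eq_mul, stdAddChar_intCast_mul,
    ofReal_cos, cos]
  rw [div_mul_eq_mul_div, div_mul_eq_mul_div, ← exp_add, ← exp_add]
  push_cast
  ring_nf

end Fourier

section Variation

variable (n : ℕ) [NeZero n] (w : ZMod n → ℂ)

noncomputable def circVarₗ : Module.End ℂ (ZMod n → ℂ) where
  toFun := circVar n w
  map_add' u v := by
    ext j
    simp only [circVar, Pi.add_apply, mul_add, sum_add_distrib]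
    ring
  map_smul' c u := by
    ext j
    simp only [circVar, Pi.smul_apply, smul_eq_mul, RingHom.id_apply, mul_sub, mul_sum]
    congr 1
    exact sum_congr rfl fun k _ => by ring

lemma coe_circVarₗ : ⇑(circVarₗ n w) = circVar n w := rfl

lemma circVar_stdAddChar (c : ZMod n) :
    circVar n w (fun k => ZMod.stdAddChar (c * k)) =
      (1 - dft n w c) • fun k => ZMod.stdAddChar (c * k) := by
  ext j
  have hshift : ∀ k, ZMod.stdAddChar (c * (j - k)) =
      ZMod.stdAddChar (-(k * c)) * ZMod.stdAddChar (c * j) := by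
    intro k
    rw [← AddChar.map_add_eq_mul]
    ring_nf
  simp only [circVar, hshift, dft_eq_zmod_dft, ZMod.dft_apply, smul_eq_mul, Pi.smul_apply,
    sub_mul, one_mul, sum_mul]
  congr 1
  exact sum_congr rfl fun k _ => by ring

lemma circVar_tone (h_even : ∀ ξ : ZMod n, dft n w (-ξ) = dft n w ξ) (c : ℕ) (ψ : ℝ) :
    circVar n w (tone n c ψ) = (1 - dft n w c) • tone n c ψ := by
  have hneg : ((-c : ℤ) : ZMod n) = -(c : ZMod n) := by push_cast; rfl
  rw [tone_eq_stdAddChar, ← coe_circVarₗ, map_add, map_smul, map_smul, coe_circVarₗ,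
    circVar_stdAddChar, circVar_stdAddChar, hneg, h_even, Int.cast_natCast]
  module

end Variation

theorem two_tone_separation_general
    (n : ℕ) [NeZero n] (f₁ f₂ : ℕ) (a φ : ℝ)
    (w : ZMod n → ℂ)
    (h_even : ∀ ξ : ZMod n, dft n w (-ξ) = dft n w ξ)
    (h_zero : dft n w (f₁ : ZMod n) = 0)
    (h_pos : ∃ r : ℝ, r ∈ Set.Ioc (0 : ℝ) 1 ∧ dft n w (f₂ : ZMod n) = (r : ℂ))
    (s s₁ : ZMod n → ℂ)
    (hs : ∀ j : ZMod n, s j = (Real.cos (2 * Real.pi * f₁ * (j.val : ℝ) / n) : ℂ) +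
      (a : ℂ) * (Real.cos (2 * Real.pi * f₂ * (j.val : ℝ) / n + φ) : ℂ))
    (hs₁ : ∀ j : ZMod n, s₁ j = (Real.cos (2 * Real.pi * f₁ * (j.val : ℝ) / n) : ℂ)) :
    Tendsto (fun p : ℕ =>
        Real.sqrt (∑ j : ZMod n, ‖(circVar n w)^[p] s j - s₁ j‖ ^ 2))
      atTop (nhds 0) := by
  obtain ⟨r, ⟨hr0, hr1⟩, hr⟩ := h_pos
  have hs₁' : s₁ = tone n f₁ 0 := funext fun j => by simp [hs₁, tone]
  have hs' : s = tone n f₁ 0 + (a : ℂ) • tone n f₂ φ := funext fun j => by simp [hs, tone]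
  have hfix : circVarₗ n w (tone n f₁ 0) = tone n f₁ 0 := by
    rw [coe_circVarₗ, circVar_tone n w h_even, h_zero, sub_zero, one_smul]
  have hdamp : circVarₗ n w ((a : ℂ) • tone n f₂ φ) =
      ((1 - r : ℝ) : ℂ) • ((a : ℂ) • tone n f₂ φ) := by
    rw [map_smul, coe_circVarₗ, circVar_tone n w h_even, hr, smul_comm, ofReal_sub, ofReal_one]
  have hiter : ∀ p, (circVar n w)^[p] s - s₁ =
      ((1 - r : ℝ) : ℂ) ^ p • ((a : ℂ) • tone n f₂ φ) := by
    intro p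
    rw [hs', hs₁', ← coe_circVarₗ, LinearMap.iterate_apply_add_of_eq_smul hfix hdamp,
      add_sub_cancel_left]
  simp_rw [← Pi.sub_apply, hiter]
  refine tendsto_sqrt_sum_norm_sq_pow_smul ?_ _
  rw [norm_real, Real.norm_of_nonneg (by linarith)]
  linarith

/-- Two-tone separation by Fast Iterative Filtering. For
`s j = cos(2πf₁j/n) + a·cos(2πf₂j/n + φ)` with integer frequencies
`1 ≤ f₂ < f₁ ≤ n/2 − 1`, and a double convolution filter `w` whose (even, real,
`[0,1]`-valued) DFT vanishes at `f₁` and lies in `(0,1]` at `f₂`, the iterates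
`V_w^p s` converge in Euclidean norm to the higher-frequency component
`cos(2πf₁j/n)` as `p → ∞`. -/
theorem two_tone_separation
    (n : ℕ) [NeZero n] (f₁ f₂ : ℕ) (a φ : ℝ)
    (hf2pos : 1 ≤ f₂) (hlt : f₂ < f₁) (hf1 : f₁ ≤ n / 2 - 1)
    (w : ZMod n → ℂ)
    (h_range : ∀ ξ : ZMod n, ∃ r : ℝ, r ∈ Set.Icc (0 : ℝ) 1 ∧ dft n w ξ = (r : ℂ))
    (h_even : ∀ ξ : ZMod n, dft n w (-ξ) = dft n w ξ)
    (h_zero : dft n w (f₁ : ZMod n) = 0)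
    (h_pos : ∃ r : ℝ, r ∈ Set.Ioc (0 : ℝ) 1 ∧ dft n w (f₂ : ZMod n) = (r : ℂ))
    (s s₁ : ZMod n → ℂ)
    (hs : ∀ j : ZMod n, s j = (Real.cos (2 * Real.pi * f₁ * (j.val : ℝ) / n) : ℂ) +
      (a : ℂ) * (Real.cos (2 * Real.pi * f₂ * (j.val : ℝ) / n + φ) : ℂ))
    (hs₁ : ∀ j : ZMod n, s₁ j = (Real.cos (2 * Real.pi * f₁ * (j.val : ℝ) / n) : ℂ)) :
    Tendsto (fun p : ℕ =>
        Real.sqrt (∑ j : ZMod n, ‖(circVar n w)^[p] s j - s₁ j‖ ^ 2))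
      atTop (nhds 0) :=
  two_tone_separation_general n f₁ f₂ a φ w h_even h_zero h_pos s s₁ hs hs₁
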